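/- arXiv:2407.02535 — 2 statements merged into one kernel-verified Lean document; each statement's English description precedes it below -/
import Mathlib

section
/- Let G be a simple graph with m edges and let ℓ ≥ 1. Then the matrix (1 + ℓ(e(G^ℓ) − m)) L(G) − L(G^ℓ) is positive semidefinite, where G^ℓ is the ℓ-th power of G. -/
open Matrix SimpleGraph Finset

/-- The second smallest eigenvalue of a Hermitian real matrix (the second entry of the
nondecreasingly sorted list of eigenvalues, with multiplicity). -/
noncomputable def secondSmallestEigenvalue {m : Type*} [Fintype m] [DecidableEq m]
    (M : Matrix m m ℝ) (hM : M.IsHermitian) : ℝ :=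
  ((Finset.univ.val.map hM.eigenvalues).sort (· ≤ ·)).getD 1 0

/-- The algebraic connectivity of a graph: the second smallest Laplacian eigenvalue. -/
noncomputable def lambda2 {V : Type*} [Fintype V] [DecidableEq V] (G : SimpleGraph V) : ℝ :=
  letI := Classical.decRel G.Adj
  secondSmallestEigenvalue (G.lapMatrix ℝ) (SimpleGraph.posSemidef_lapMatrix (R := ℝ) (G := G)).1

/-- The `ℓ`-th power of a graph: two vertices are adjacent iff they are distinct and their
distance in `G` is at most `ℓ`. -/
def graphPow {V : Type*} (G : SimpleGraph V) (ℓ : ℕ) : SimpleGraph V where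
  Adj u v := u ≠ v ∧ G.edist u v ≤ ℓ
  symm := by
    constructor
    intro u v h
    exact ⟨h.1.symm, by rw [SimpleGraph.edist_comm]; exact h.2⟩
  loopless := by constructor; intro v h; exact h.1 rfl

/-- The number of vertices of `G` whose eccentricity is at most `ℓ`. -/
noncomputable def sEcc {V : Type*} (G : SimpleGraph V) (ℓ : ℕ) : ℕ :=
  Nat.card {v : V | ∀ w, G.edist v w ≤ ℓ}

/-- The Laplacian matrix of a graph, over `ℝ`. -/
noncomputable def lapR {V : Type*} [Fintype V] [DecidableEq V] (G : SimpleGraph V) :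
    Matrix V V ℝ :=
  letI := Classical.decRel G.Adj
  G.lapMatrix ℝ

section Aux
set_option linter.unusedSectionVars false
variable {V : Type*} [Fintype V] [DecidableEq V]

/-- quadratic weight of an edge -/
noncomputable def qf (x : V → ℝ) : Sym2 V → ℝ :=
  Sym2.lift ⟨fun a b => (x a - x b)^2, fun a b => by ring⟩

lemma qf_mk (x : V → ℝ) (a b : V) : qf x s(a,b) = (x a - x b)^2 := rfl

lemma qf_nonneg (x : V → ℝ) (e : Sym2 V) : 0 ≤ qf x e := by
  induction e using Sym2.ind with
  | _ a b => exact sq_nonneg _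

lemma walk_bound {G : SimpleGraph V} (x : V → ℝ) {u v : V} (p : G.Walk u v) :
    (x u - x v)^2 ≤ (p.length : ℝ) * ((p.edges.map (qf x)).sum) := by
  induction p with
  | nil => simp
  | @cons u w v h q ih =>
    have hS : 0 ≤ (q.edges.map (qf x)).sum := by
      apply List.sum_nonneg
      intro a ha
      obtain ⟨e, -, rfl⟩ := List.mem_map.mp ha
      exact qf_nonneg x e
    simp only [Walk.length_cons, Walk.edges_cons, List.map_cons, List.sum_cons,
      Nat.cast_add, Nat.cast_one, qf_mk]
    rcases Nat.eq_zero_or_pos q.length with h0 | hpos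
    · have hb : x w - x v = 0 := by
        rw [h0] at ih
        push_cast at ih
        nlinarith [sq_nonneg (x w - x v)]
      have hv : x v = x w := by linarith
      rw [h0, hv]
      push_cast
      nlinarith [hS]
    · have hn0 : (0:ℝ) < (q.length : ℝ) := by exact_mod_cast hpos
      have h2 : (q.length:ℝ) * ((x u - x v)^2) ≤
          (q.length:ℝ) * (((q.length:ℝ)+1) * ((x u - x w)^2 + (q.edges.map (qf x)).sum)) := by
        nlinarith [sq_nonneg ((q.length:ℝ)*(x u - x w) - (x w - x v)), ih, hS,
          mul_le_mul_of_nonneg_left ih (le_of_lt hn0)]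
      exact le_of_mul_le_mul_left h2 hn0

lemma pair_bound {G : SimpleGraph V} [Fintype G.edgeSet] (x : V → ℝ) {u v : V} {ℓ : ℕ}
    (hd : G.edist u v ≤ ℓ) :
    (x u - x v)^2 ≤ (ℓ : ℝ) * ∑ e ∈ G.edgeFinset, qf x e := by
  have htop : G.edist u v ≠ ⊤ := fun h => by simp [h] at hd
  obtain ⟨p, hp⟩ := SimpleGraph.exists_walk_of_edist_ne_top htop
  have hlenN : p.length ≤ ℓ := by
    have : (p.length : ℕ∞) ≤ (ℓ : ℕ∞) := hp ▸ hd
    exact_mod_cast this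
  set q := p.bypass with hq
  have hpath := p.bypass_isPath
  have hql : (q.length : ℝ) ≤ (ℓ:ℝ) := by
    have := le_trans p.length_bypass_le hlenN
    exact_mod_cast this
  have h1 := walk_bound x q
  have h2 : (q.edges.map (qf x)).sum ≤ ∑ e ∈ G.edgeFinset, qf x e := by
    rw [← List.sum_toFinset _ hpath.isTrail.edges_nodup]
    apply Finset.sum_le_sum_of_subset_of_nonneg
    · intro e he
      rw [List.mem_toFinset] at he
      exact SimpleGraph.mem_edgeFinset.mpr (q.edges_subset_edgeSet he)
    · intro e _ _; exact qf_nonneg x e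
  have hsum0 : 0 ≤ (q.edges.map (qf x)).sum := by
    apply List.sum_nonneg
    intro a ha
    obtain ⟨e, -, rfl⟩ := List.mem_map.mp ha
    exact qf_nonneg x e
  calc (x u - x v)^2 ≤ (q.length : ℝ) * (q.edges.map (qf x)).sum := h1
    _ ≤ (ℓ:ℝ) * ∑ e ∈ G.edgeFinset, qf x e :=
        mul_le_mul hql h2 hsum0 (by positivity)

lemma dart_sum {G : SimpleGraph V} [DecidableRel G.Adj] (f : Sym2 V → ℝ) :
    ∑ d : G.Dart, f d.edge = 2 * ∑ e ∈ G.edgeFinset, f e := by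
  rw [← Finset.sum_fiberwise_of_maps_to (g := SimpleGraph.Dart.edge) (t := G.edgeFinset)
      (fun d _ => SimpleGraph.mem_edgeFinset.mpr d.edge_mem) (fun d => f d.edge)]
  rw [Finset.mul_sum]
  refine Finset.sum_congr rfl fun e he => ?_
  have hcard := G.dart_edge_fiber_card e (SimpleGraph.mem_edgeFinset.mp he)
  calc ∑ d ∈ Finset.univ.filter (fun d : G.Dart => d.edge = e), f d.edge
      = ∑ _d ∈ Finset.univ.filter (fun d : G.Dart => d.edge = e), f e :=
        Finset.sum_congr rfl fun d hd => by rw [(Finset.mem_filter.mp hd).2]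
    _ = 2 * f e := by rw [Finset.sum_const, hcard, two_smul, two_mul]

lemma lap_quad {G : SimpleGraph V} [DecidableRel G.Adj] (x : V → ℝ) :
    x ⬝ᵥ (G.lapMatrix ℝ) *ᵥ x = ∑ e ∈ G.edgeFinset, qf x e := by
  have h := G.lapMatrix_toLinearMap₂' (R := ℝ) x
  rw [Matrix.toLinearMap₂'_apply'] at h
  rw [h]
  have h1 : ∑ p ∈ ((Finset.univ : Finset (V×V)).filter (fun p => G.Adj p.1 p.2)),
      (x p.1 - x p.2)^2 = ∑ i : V, ∑ j : V, (if G.Adj i j then (x i - x j)^2 else 0) := by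
    rw [Finset.sum_filter, ← Finset.univ_product_univ, Finset.sum_product]
  have h2 : ∑ p ∈ ((Finset.univ : Finset (V×V)).filter (fun p => G.Adj p.1 p.2)),
      (x p.1 - x p.2)^2 = ∑ d : G.Dart, qf x d.edge := by
    refine Finset.sum_bij' (fun p hp => SimpleGraph.Dart.mk p (Finset.mem_filter.mp hp).2)
      (fun d _ => d.toProd) ?_ ?_ ?_ ?_ ?_
    · intro p hp; exact Finset.mem_univ _
    · intro d _
      simp [d.adj]
    · intro p hp; rfl
    · intro d _; rfl
    · intro p hp; rfl
  rw [← h1, h2, dart_sum (qf x)]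
  ring

end Aux

/-- `(1 + ℓ(e(G^ℓ) - m)) L(G) - L(G^ℓ)` is positive semidefinite. -/
theorem stmt_5 {V : Type*} [Fintype V] [DecidableEq V] (G : SimpleGraph V)
    (m : ℕ) (hm : m = Nat.card G.edgeSet) (ℓ : ℕ) (hℓ : 1 ≤ ℓ) :
    ((1 + (ℓ : ℝ) * ((Nat.card (graphPow G ℓ).edgeSet : ℝ) - m)) • lapR G -
      lapR (graphPow G ℓ)).PosSemidef := by
  letI : DecidableRel G.Adj := Classical.decRel _
  letI : DecidableRel (graphPow G ℓ).Adj := Classical.decRel _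
  have hsub : G.edgeFinset ⊆ (graphPow G ℓ).edgeFinset := by
    intro e he
    rw [SimpleGraph.mem_edgeFinset] at he ⊢
    induction e using Sym2.ind with
    | _ a b =>
      rw [SimpleGraph.mem_edgeSet] at he ⊢
      refine ⟨G.ne_of_adj he, ?_⟩
      rw [(SimpleGraph.edist_eq_one_iff_adj).mpr he]
      exact_mod_cast hℓ
  have hmcard : m = G.edgeFinset.card := by
    rw [hm, Nat.card_eq_fintype_card, ← Set.toFinset_card]
    congr 1
  have hEcard : Nat.card (graphPow G ℓ).edgeSet = (graphPow G ℓ).edgeFinset.card := by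
    rw [Nat.card_eq_fintype_card, ← Set.toFinset_card]
    congr 1
  set c : ℝ := 1 + (ℓ : ℝ) * ((Nat.card (graphPow G ℓ).edgeSet : ℝ) - m) with hc
  have hlapG : lapR G = G.lapMatrix ℝ := rfl
  have hlapP : lapR (graphPow G ℓ) = (graphPow G ℓ).lapMatrix ℝ := rfl
  refine Matrix.posSemidef_iff_dotProduct_mulVec.mpr ⟨?_, ?_⟩
  · -- Hermitian
    have hG := (SimpleGraph.posSemidef_lapMatrix (R := ℝ) (G := G)).1
    have hP := (SimpleGraph.posSemidef_lapMatrix (R := ℝ) (G := graphPow G ℓ)).1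
    rw [hlapG, hlapP]
    have hsmul : (c • G.lapMatrix ℝ).IsHermitian := by
      unfold Matrix.IsHermitian
      rw [Matrix.conjTranspose_smul, star_trivial, hG.eq]
    exact hsmul.sub hP
  · intro x
    rw [hlapG, hlapP, star_trivial, sub_mulVec, smul_mulVec, dotProduct_sub,
      dotProduct_smul, smul_eq_mul, lap_quad, lap_quad, sub_nonneg]
    set Q := ∑ e ∈ G.edgeFinset, qf x e with hQdef
    have hQ0 : 0 ≤ Q := Finset.sum_nonneg fun e _ => qf_nonneg x e
    -- split the power sum
    have hsplit : ∑ e ∈ (graphPow G ℓ).edgeFinset, qf x e =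
        (∑ e ∈ (graphPow G ℓ).edgeFinset \ G.edgeFinset, qf x e) + Q := by
      rw [hQdef, Finset.sum_sdiff hsub]
    have hbound : ∀ e ∈ (graphPow G ℓ).edgeFinset \ G.edgeFinset, qf x e ≤ (ℓ:ℝ) * Q := by
      intro e he
      have he' := Finset.mem_sdiff.mp he
      have hadj := SimpleGraph.mem_edgeFinset.mp he'.1
      induction e using Sym2.ind with
      | _ a b =>
        rw [SimpleGraph.mem_edgeSet] at hadj
        rw [qf_mk]
        exact pair_bound x hadj.2
    have hsum_le : ∑ e ∈ (graphPow G ℓ).edgeFinset \ G.edgeFinset, qf x e ≤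
        (((graphPow G ℓ).edgeFinset \ G.edgeFinset).card : ℝ) * ((ℓ:ℝ) * Q) := by
      have := Finset.sum_le_card_nsmul _ _ _ hbound
      rwa [nsmul_eq_mul] at this
    have hcard : (((graphPow G ℓ).edgeFinset \ G.edgeFinset).card : ℝ) =
        ((Nat.card (graphPow G ℓ).edgeSet : ℝ) - m) := by
      rw [Finset.card_sdiff_of_subset hsub, hEcard, hmcard]
      have hle : G.edgeFinset.card ≤ (graphPow G ℓ).edgeFinset.card :=
        Finset.card_le_card hsub
      push_cast [Nat.cast_sub hle]
      ring
    rw [hc]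
    calc ∑ e ∈ (graphPow G ℓ).edgeFinset, qf x e
        ≤ (((Nat.card (graphPow G ℓ).edgeSet : ℝ) - m) * ((ℓ:ℝ) * Q)) + Q := by
          rw [hsplit]
          exact add_le_add_left (le_trans hsum_le (by rw [hcard])) Q
      _ = (1 + (ℓ : ℝ) * ((Nat.card (graphPow G ℓ).edgeSet : ℝ) - m)) * Q := by ring
end

section
/- Let G be a simple graph and ℓ ≥ 1. For any real vector x indexed by the vertices, xᵀ L(G^ℓ) x ≤ (1 + ℓ(e(G^ℓ) − m)) xᵀ L(G) x, where m is the number of edges of G and e(G^ℓ) the number of edges of G^ℓ. -/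
open Matrix SimpleGraph Finset

/-- The quadratic form term associated to an edge. -/
noncomputable def quadTerm {V : Type*} (x : V → ℝ) : Sym2 V → ℝ :=
  Sym2.lift ⟨fun u v => (x u - x v)^2, fun u v => by ring⟩

lemma quadTerm_nonneg {V : Type*} (x : V → ℝ) (e : Sym2 V) : 0 ≤ quadTerm x e := by
  induction e with
  | _ u v => exact sq_nonneg _

lemma lapR_eq {V : Type*} [Fintype V] [DecidableEq V] (G : SimpleGraph V)
    [DecidableRel G.Adj] : lapR G = G.lapMatrix ℝ := by
  unfold lapR
  congr!

lemma quad_eq {V : Type*} [Fintype V] [DecidableEq V] (G : SimpleGraph V)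
    [DecidableRel G.Adj] (x : V → ℝ) :
    x ⬝ᵥ (G.lapMatrix ℝ).mulVec x = ∑ e ∈ G.edgeFinset, quadTerm x e := by
  rw [← toLinearMap₂'_apply', lapMatrix_toLinearMap₂']
  have h1 : ∑ d : G.Dart, quadTerm x d.edge
      = ∑ p ∈ (univ ×ˢ univ).filter (fun p : V × V => G.Adj p.1 p.2),
          (x p.1 - x p.2)^2 := by
    refine Finset.sum_bij (fun d _ => d.toProd) ?_ ?_ ?_ ?_
    · intro d _
      simp [Finset.mem_filter, d.adj]
    · intro d1 _ d2 _ h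
      exact SimpleGraph.Dart.ext _ _ h
    · intro p hp
      exact ⟨⟨p, (Finset.mem_filter.mp hp).2⟩, Finset.mem_univ _, rfl⟩
    · intro d _
      rfl
  have h2 : ∑ d : G.Dart, quadTerm x d.edge
      = 2 * ∑ e ∈ G.edgeFinset, quadTerm x e := by
    have hf := Finset.sum_fiberwise_of_maps_to (s := (univ : Finset G.Dart))
      (t := G.edgeFinset) (g := SimpleGraph.Dart.edge)
      (fun d _ => by rw [mem_edgeFinset]; exact d.edge_mem)
      (fun d => quadTerm x d.edge)
    rw [← hf, Finset.mul_sum]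
    refine Finset.sum_congr rfl fun e he => ?_
    rw [Finset.sum_congr rfl (fun d hd => by
      rw [(Finset.mem_filter.mp hd).2]), Finset.sum_const,
      G.dart_edge_fiber_card e (mem_edgeFinset.mp he)]
    simp [mul_comm]
  have h3 : ∑ i : V, ∑ j : V, (if G.Adj i j then (x i - x j)^2 else 0)
      = ∑ p ∈ (univ ×ˢ univ).filter (fun p : V × V => G.Adj p.1 p.2),
          (x p.1 - x p.2)^2 := by
    rw [Finset.sum_filter, ← Finset.sum_product']
  rw [h3, ← h1, h2]
  ring

lemma telescope {V : Type*} {G : SimpleGraph V} {u v : V} (x : V → ℝ) (w : G.Walk u v) :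
    (w.darts.map (fun d => x d.toProd.1 - x d.toProd.2)).sum = x u - x v := by
  induction w with
  | nil => simp
  | cons h p ih => simp only [SimpleGraph.Walk.darts_cons, List.map_cons, List.sum_cons, ih]; ring

lemma list_cs (l : List ℝ) : l.sum ^ 2 ≤ (l.length : ℝ) * (l.map (·^2)).sum := by
  rw [← Fin.sum_univ_getElem l, ← Fin.sum_univ_fun_getElem l (·^2)]
  have := sq_sum_le_card_mul_sum_sq (s := (univ : Finset (Fin l.length)))
    (f := fun i => l[i.1])
  simpa using this

lemma key {V : Type*} [Fintype V] [DecidableEq V] (G : SimpleGraph V)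
    [DecidableRel G.Adj] (x : V → ℝ) {ℓ : ℕ} {u v : V}
    (h : (graphPow G ℓ).Adj u v) :
    (x u - x v)^2 ≤ (ℓ : ℝ) * ∑ e ∈ G.edgeFinset, quadTerm x e := by
  have hne : G.edist u v ≠ ⊤ := (lt_of_le_of_lt h.2 (by exact_mod_cast ENat.coe_lt_top ℓ)).ne
  obtain ⟨w, hw⟩ := SimpleGraph.exists_walk_of_edist_ne_top hne
  set p := w.bypass with hp
  have hpath : p.IsPath := w.bypass_isPath
  have hlen : p.length ≤ ℓ := by
    have h1 : (w.length : ℕ∞) ≤ ℓ := hw ▸ h.2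
    exact le_trans w.length_bypass_le (by exact_mod_cast h1)
  set l : List ℝ := p.darts.map (fun d => x d.toProd.1 - x d.toProd.2) with hl
  have ht : l.sum = x u - x v := telescope x p
  have hcs : (x u - x v)^2 ≤ (l.length : ℝ) * (l.map (·^2)).sum := ht ▸ list_cs l
  have hmap : (l.map (·^2)).sum = (p.edges.map (quadTerm x)).sum := by
    rw [hl, List.map_map, SimpleGraph.Walk.edges, List.map_map]
    congr 1
  have hsq : (p.edges.map (quadTerm x)).sum ≤ ∑ e ∈ G.edgeFinset, quadTerm x e := by
    rw [← List.sum_toFinset _ hpath.edges_nodup]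
    refine Finset.sum_le_sum_of_subset_of_nonneg ?_ (fun e _ _ => quadTerm_nonneg x e)
    intro e he
    rw [SimpleGraph.mem_edgeFinset]
    exact p.edges_subset_edgeSet (List.mem_toFinset.mp he)
  have hll : (l.length : ℝ) ≤ ℓ := by
    rw [hl, List.length_map, SimpleGraph.Walk.length_darts]
    exact_mod_cast hlen
  calc (x u - x v)^2 ≤ (l.length : ℝ) * (l.map (·^2)).sum := hcs
    _ ≤ (ℓ : ℝ) * ∑ e ∈ G.edgeFinset, quadTerm x e := by
        rw [hmap]
        exact mul_le_mul hll hsq (by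
          rw [← List.sum_toFinset _ hpath.edges_nodup]
          exact Finset.sum_nonneg fun e _ => quadTerm_nonneg x e) (Nat.cast_nonneg ℓ)

/-- For any vector `x`, `xᵀ L(G^ℓ) x ≤ (1 + ℓ(e(G^ℓ) - m)) xᵀ L(G) x`. -/
theorem stmt_10 {V : Type*} [Fintype V] [DecidableEq V] (G : SimpleGraph V)
    (m : ℕ) (hm : m = Nat.card G.edgeSet) (ℓ : ℕ) (hℓ : 1 ≤ ℓ) (x : V → ℝ) :
    x ⬝ᵥ (lapR (graphPow G ℓ)).mulVec x ≤
      (1 + (ℓ : ℝ) * ((Nat.card (graphPow G ℓ).edgeSet : ℝ) - m)) *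
        (x ⬝ᵥ (lapR G).mulVec x) := by
  classical
  rw [lapR_eq, lapR_eq, quad_eq, quad_eq]
  set EG := G.edgeFinset with hEG
  set EP := (graphPow G ℓ).edgeFinset with hEP
  set Q := ∑ e ∈ EG, quadTerm x e with hQ
  have hle : G ≤ graphPow G ℓ := by
    intro u v h
    refine ⟨h.ne, ?_⟩
    calc G.edist u v ≤ h.toWalk.length := SimpleGraph.edist_le h.toWalk
      _ ≤ (ℓ : ℕ∞) := by
          simp only [SimpleGraph.Adj.toWalk, SimpleGraph.Walk.length_cons,
            SimpleGraph.Walk.length_nil]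
          exact_mod_cast hℓ
  have hsub : EG ⊆ EP := by
    intro e he
    rw [hEP, SimpleGraph.mem_edgeFinset]
    exact SimpleGraph.edgeSet_mono hle (SimpleGraph.mem_edgeFinset.mp he)
  have hQ0 : 0 ≤ Q := Finset.sum_nonneg fun e _ => quadTerm_nonneg x e
  have hmEG : m = EG.card := by
    rw [hm, Nat.card_eq_fintype_card, hEG, SimpleGraph.edgeFinset_card]
  have hmEP : Nat.card (graphPow G ℓ).edgeSet = EP.card := by
    rw [Nat.card_eq_fintype_card, hEP, SimpleGraph.edgeFinset_card]
  have hsplit : ∑ e ∈ EP, quadTerm x e = Q + ∑ e ∈ EP \ EG, quadTerm x e := by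
    rw [hQ, ← Finset.sum_sdiff hsub, add_comm]
  have hbound : ∑ e ∈ EP \ EG, quadTerm x e ≤ ((EP.card - EG.card : ℕ) : ℝ) * ((ℓ : ℝ) * Q) := by
    calc ∑ e ∈ EP \ EG, quadTerm x e ≤ ∑ _e ∈ EP \ EG, (ℓ : ℝ) * Q := by
          refine Finset.sum_le_sum fun e he => ?_
          have hadj : e ∈ (graphPow G ℓ).edgeSet :=
            SimpleGraph.mem_edgeFinset.mp (Finset.mem_sdiff.mp he).1
          induction e with
          | _ u v => exact key G x ((SimpleGraph.mem_edgeSet _).mp hadj)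
      _ = ((EP.card - EG.card : ℕ) : ℝ) * ((ℓ : ℝ) * Q) := by
          rw [Finset.sum_const, Finset.card_sdiff_of_subset hsub, nsmul_eq_mul]
  have hcast : ((EP.card - EG.card : ℕ) : ℝ) = (EP.card : ℝ) - EG.card :=
    Nat.cast_sub (Finset.card_le_card hsub)
  rw [hsplit, hmEP, hmEG]
  rw [hcast] at hbound
  nlinarith [hbound, hQ0]
end
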